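/- Let ρ be any linear order. Then the linear order τ = Σ_{n<ω} ρⁿ (the ω-indexed ordered sum whose n-th summand is the n-fold product ρⁿ, with ρ⁰ a one-element order) is untranscendable: whenever A and B are linear orders with A ≼ τ, B ≼ τ, and τ ≼ AB, then τ ≼ A or τ ≼ B. -/

import Mathlib

universe u v

/-- `Embeds X Y` means there is a strictly order-preserving map from `X` to `Y`. -/
def Embeds (X : Type u) (Y : Type v) [LinearOrder X] [LinearOrder Y] : Prop :=
  ∃ f : X → Y, StrictMono f

/-- The `n`-fold anti-lexicographic power `ρⁿ = ρρ⋯ρ`: tuples are compared at the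
last coordinate where they differ.  `ρ⁰` is a one-element order. -/
def OrdPow (ρ : Type u) : ℕ → Type u
  | 0 => PUnit
  | n + 1 => ρ ×ₗ OrdPow ρ n

def ordPowLinearOrder (ρ : Type u) [LinearOrder ρ] : (n : ℕ) → LinearOrder (OrdPow ρ n)
  | 0 => inferInstanceAs (LinearOrder PUnit)
  | n + 1 =>
    letI := ordPowLinearOrder ρ n
    (inferInstanceAs (LinearOrder (ρ ×ₗ OrdPow ρ n)) : LinearOrder (ρ ×ₗ OrdPow ρ n))

instance (ρ : Type u) [LinearOrder ρ] (n : ℕ) : LinearOrder (OrdPow ρ n) :=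
  ordPowLinearOrder ρ n

set_option linter.unusedSectionVars false
set_option maxHeartbeats 1000000

section Basics
variable {ρ : Type u} [LinearOrder ρ]

def OrdPow.cons {n : ℕ} (r : ρ) (x : OrdPow ρ n) : OrdPow ρ (n+1) := toLex (r, x)

def OrdPow.head {n : ℕ} (z : OrdPow ρ (n+1)) : ρ := (ofLex z).1

def OrdPow.tail {n : ℕ} (z : OrdPow ρ (n+1)) : OrdPow ρ n := (ofLex z).2

@[simp] theorem OrdPow.head_cons {n : ℕ} (r : ρ) (x : OrdPow ρ n) : (cons r x).head = r := rfl
@[simp] theorem OrdPow.tail_cons {n : ℕ} (r : ρ) (x : OrdPow ρ n) : (cons r x).tail = x := rfl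
@[simp] theorem OrdPow.cons_head_tail {n : ℕ} (z : OrdPow ρ (n+1)) : cons z.head z.tail = z := rfl

theorem OrdPow.lt_iff {n : ℕ} {z w : OrdPow ρ (n+1)} :
    z < w ↔ z.head < w.head ∨ z.head = w.head ∧ z.tail < w.tail :=
  Prod.Lex.lt_iff (α := ρ) (β := OrdPow ρ n) (x := z) (y := w)

theorem ordPow_nonempty [Nonempty ρ] (n : ℕ) : Nonempty (OrdPow ρ n) := by
  induction n with
  | zero => exact ⟨PUnit.unit⟩
  | succ n ih => exact ⟨OrdPow.cons (Classical.arbitrary ρ) ih.some⟩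


section Pad
variable {ρ : Type u} [LinearOrder ρ]

theorem exists_pad [Nonempty ρ] {j n : ℕ} (h : j ≤ n) :
    ∃ f : OrdPow ρ j → OrdPow ρ n, StrictMono f := by
  induction n, h using Nat.le_induction with
  | base => exact ⟨id, fun _ _ h => h⟩
  | succ n hjn ih =>
    obtain ⟨f, hf⟩ := ih
    refine ⟨fun x => OrdPow.cons (Classical.arbitrary ρ) (f x), fun x y hxy => ?_⟩
    exact OrdPow.lt_iff.2 (Or.inr ⟨rfl, by simpa using hf hxy⟩)

theorem exists_pair (m n : ℕ) :
    ∃ F : OrdPow ρ m → OrdPow ρ n → OrdPow ρ (n + m),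
      (∀ y y' x x', y < y' → F y x < F y' x') ∧ (∀ y x x', x < x' → F y x < F y x') := by
  induction m with
  | zero =>
    haveI : Subsingleton (OrdPow ρ 0) := inferInstanceAs (Subsingleton PUnit)
    exact ⟨fun _ x => x, fun y y' x x' hy => absurd (Subsingleton.elim y y' ▸ hy) (lt_irrefl y'),
      fun _ _ _ h => h⟩
  | succ m ih =>
    obtain ⟨F, h1, h2⟩ := ih
    refine ⟨fun z x => OrdPow.cons z.head (F z.tail x), ?_, ?_⟩
    · intro y y' x x' hy
      rcases OrdPow.lt_iff.1 hy with hh | ⟨hh, ht⟩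
      · exact OrdPow.lt_iff.2 (Or.inl (by simpa using hh))
      · exact OrdPow.lt_iff.2 (Or.inr ⟨by simpa using hh, by simpa using h1 _ _ x x' ht⟩)
    · intro y x x' hx
      exact OrdPow.lt_iff.2 (Or.inr ⟨rfl, by simpa using h2 _ x x' hx⟩)

end Pad

section SigmaHelpers
variable {ρ : Type u} [LinearOrder ρ]

theorem summand_strictMono (n : ℕ) :
    StrictMono (fun t : OrdPow ρ n => (toLex ⟨n, t⟩ : Σₗ n : ℕ, OrdPow ρ n)) := by
  intro x y hxy
  exact Sigma.Lex.lt_def.2 (Or.inr ⟨rfl, hxy⟩)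

theorem sigma_fst_mono {x y : Σₗ n : ℕ, OrdPow ρ n} (h : x < y) : x.1 ≤ y.1 := by
  rcases Sigma.Lex.lt_def.1 h with h1 | ⟨h1, _⟩
  · exact h1.le
  · exact h1.le

theorem sigma_lt_of_fst_lt {x y : Σₗ n : ℕ, OrdPow ρ n} (h : x.1 < y.1) : x < y :=
  Sigma.Lex.lt_def.2 (Or.inl h)

noncomputable def sigmaProj [Nonempty ρ] (m : ℕ) (a : Σ n : ℕ, OrdPow ρ n) : OrdPow ρ m :=
  if h : a.1 = m then h ▸ a.2 else (ordPow_nonempty m).some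

theorem sigmaProj_lt [Nonempty ρ] {m : ℕ} {a b : Σ n : ℕ, OrdPow ρ n}
    (h : (toLex a : Σₗ n : ℕ, OrdPow ρ n) < toLex b) (ha : a.1 = m) (hb : b.1 = m) :
    sigmaProj m a < sigmaProj m b := by
  obtain ⟨a1, a2⟩ := a
  obtain ⟨b1, b2⟩ := b
  dsimp at ha hb
  subst ha; subst hb
  rcases Sigma.Lex.lt_def.1 h with h1 | ⟨h1, h2⟩
  · exact absurd h1 (lt_irrefl _)
  · have h2' : a2 < b2 := h2
    simpa [sigmaProj] using h2'

end SigmaHelpers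

section Dichotomy
variable {ρ : Type u} [LinearOrder ρ]

theorem dicho {W M : Type*} [LinearOrder W] [LinearOrder M] {m n : ℕ}
    (proj : W → M) (hproj : ∀ {u v : W}, u < v → proj u ≤ proj v)
    (F : OrdPow ρ m → OrdPow ρ n → W)
    (h1 : ∀ y y' x x', y < y' → F y x < F y' x')
    (h2 : ∀ y x x', x < x' → F y x < F y x') :
    (∃ y, ∀ x x', proj (F y x) = proj (F y x')) ∨ ∃ φ : OrdPow ρ m → M, StrictMono φ := by
  by_cases hc : ∃ y, ∀ x x', proj (F y x) = proj (F y x')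
  · exact Or.inl hc
  push_neg at hc
  right
  choose c1 c2 hne using hc
  have key : ∀ y, proj (F y (min (c1 y) (c2 y))) < proj (F y (max (c1 y) (c2 y))) := by
    intro y
    have hne' : c1 y ≠ c2 y := fun he => hne y (by rw [he])
    rcases hne'.lt_or_gt with hlt | hlt
    · rw [min_eq_left hlt.le, max_eq_right hlt.le]
      exact lt_of_le_of_ne (hproj (h2 y _ _ hlt)) (hne y)
    · rw [min_eq_right hlt.le, max_eq_left hlt.le]
      exact lt_of_le_of_ne (hproj (h2 y _ _ hlt)) fun he => hne y he.symm
  refine ⟨fun y => proj (F y (min (c1 y) (c2 y))), fun y y' hy => ?_⟩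
  exact lt_of_lt_of_le (key y) (hproj (h1 _ _ _ _ hy))

theorem exists_embAt [Infinite ρ] {C : Type*} [LinearOrder C]
    (idx : C → ℕ) (hidx : ∀ {u v : C}, u < v → idx u ≤ idx v)
    (hC : ∀ k, ∃ f : OrdPow ρ k → C, StrictMono f) (n : ℕ) :
    ∃ m, ∃ e : OrdPow ρ n → C, StrictMono e ∧ ∀ x, idx (e x) = m := by
  haveI : Nonempty ρ := inferInstance
  obtain ⟨G, hG⟩ := hC (n + 2)
  obtain ⟨F, h1, h2⟩ := exists_pair (ρ := ρ) 2 n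
  rcases dicho idx hidx (fun y x => G (F y x))
      (fun y y' x x' hy => hG (h1 y y' x x' hy))
      (fun y x x' hx => hG (h2 y x x' hx)) with ⟨y, hy⟩ | ⟨φ, hφ⟩
  · obtain ⟨x₀⟩ := ordPow_nonempty (ρ := ρ) n
    refine ⟨idx (G (F y x₀)), fun x => G (F y x), fun x x' hx => hG (h2 y x x' hx), fun x => hy x x₀⟩
  · exfalso
    obtain ⟨r, r', hrr⟩ : ∃ r r' : ρ, r < r' := by
      obtain ⟨a, b, hab⟩ := exists_pair_ne ρ
      rcases hab.lt_or_gt with hl | hl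
      · exact ⟨a, b, hl⟩
      · exact ⟨b, a, hl⟩
    set u : ρ → OrdPow ρ 2 := fun s => OrdPow.cons r (OrdPow.cons s PUnit.unit) with hu
    have hmono : StrictMono (fun s => φ (u s)) := by
      intro s s' hss
      refine hφ (OrdPow.lt_iff.2 (Or.inr ⟨rfl, ?_⟩))
      exact OrdPow.lt_iff.2 (Or.inl (by exact hss))
    set N := φ (OrdPow.cons r' (OrdPow.cons r PUnit.unit)) with hN
    have hbd : ∀ s, φ (u s) < N := by
      intro s
      exact hφ (OrdPow.lt_iff.2 (Or.inl (by simpa [hu] using hrr)))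
    have : Function.Injective (fun s => (⟨φ (u s), hbd s⟩ : Fin N)) := by
      intro s s' he
      exact hmono.injective (by simpa using congrArg Fin.val he)
    exact (Finite.of_injective _ this).not_infinite inferInstance
end Dichotomy

section Tall
variable {ρ : Type u} [LinearOrder ρ]

def EmbAt (ρ : Type u) [LinearOrder ρ] {C : Type*} [LinearOrder C]
    (idx : C → ℕ) (n m : ℕ) : Prop :=
  ∃ e : OrdPow ρ n → C, StrictMono e ∧ ∀ x, idx (e x) = m

theorem embAt_down [Nonempty ρ] {C : Type*} [LinearOrder C] {idx : C → ℕ}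
    {j n m : ℕ} (hjn : j ≤ n) (h : EmbAt ρ idx n m) : EmbAt ρ idx j m := by
  obtain ⟨e, he1, he2⟩ := h
  obtain ⟨f, hf⟩ := exists_pad (ρ := ρ) hjn
  exact ⟨fun x => e (f x), fun x y hxy => he1 (hf hxy), fun x => he2 (f x)⟩

theorem tall_emb [Infinite ρ] {C : Type*} [LinearOrder C]
    (g : C → (Σₗ n : ℕ, OrdPow ρ n)) (hg : StrictMono g)
    (hn : ∀ n, ∃ f : OrdPow ρ n → C, StrictMono f) :
    ∃ f : (Σₗ n : ℕ, OrdPow ρ n) → C, StrictMono f := by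
  haveI : Nonempty ρ := inferInstance
  set idx : C → ℕ := fun c => (g c).1 with hidxdef
  have hidx : ∀ {u v : C}, u < v → idx u ≤ idx v := fun h => sigma_fst_mono (hg h)
  have idx_lt : ∀ {u v : C}, idx u < idx v → u < v := by
    intro u v h
    by_contra hnot
    rcases (le_of_not_gt hnot).lt_or_eq with hl | he
    · exact absurd h (not_lt.2 (hidx hl))
    · rw [he] at h; exact lt_irrefl _ h
  have h5 : ∀ n, ∃ m, EmbAt ρ idx n m := exists_embAt idx hidx hn
  by_cases hcase : ∃ m₀, ∀ n, EmbAt ρ idx n m₀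
  · -- one block is tall
    obtain ⟨m₀, hm₀⟩ := hcase
    obtain ⟨e1, he1m, he1i⟩ := hm₀ (m₀ + 1)
    set j : C → OrdPow ρ m₀ := fun c => sigmaProj m₀ (ofLex (g c)) with hjdef
    have hj : ∀ {c c' : C}, c < c' → idx c = m₀ → idx c' = m₀ → j c < j c' :=
      fun h h1 h2 => sigmaProj_lt (hg h) h1 h2
    obtain ⟨r₀, r₁, hr⟩ : ∃ r r' : ρ, r < r' := by
      obtain ⟨x, y, hxy⟩ := exists_pair_ne ρ
      rcases hxy.lt_or_gt with hl | hl
      · exact ⟨x, y, hl⟩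
      · exact ⟨y, x, hl⟩
    set a : C → C := fun c => e1 (OrdPow.cons r₀ (j c)) with hadef
    set b : C → C := fun c => e1 (OrdPow.cons r₁ (j c)) with hbdef
    have hab : ∀ c c', a c < b c' :=
      fun c c' => he1m (OrdPow.lt_iff.2 (Or.inl (by simpa using hr)))
    have haidx : ∀ c, idx (a c) = m₀ := fun c => he1i _
    have hbidx : ∀ c, idx (b c) = m₀ := fun c => he1i _
    have hamono : ∀ {c c'}, c < c' → idx c = m₀ → idx c' = m₀ → a c < a c' :=
      fun h h1 h2 => he1m (OrdPow.lt_iff.2 (Or.inr ⟨rfl, by simpa using hj h h1 h2⟩))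
    have hbmono : ∀ {c c'}, c < c' → idx c = m₀ → idx c' = m₀ → b c < b c' :=
      fun h h1 h2 => he1m (OrdPow.lt_iff.2 (Or.inr ⟨rfl, by simpa using hj h h1 h2⟩))
    have biter : ∀ (k : ℕ) (c : C), idx c = m₀ → idx (b^[k] c) = m₀ := by
      intro k
      induction k with
      | zero => exact fun c hc => hc
      | succ k ih =>
        intro c hc
        rw [Function.iterate_succ_apply']
        exact hbidx _
    have bmono : ∀ (k : ℕ) {c c'}, c < c' → idx c = m₀ → idx c' = m₀ →
        b^[k] c < b^[k] c' := by
      intro k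
      induction k with
      | zero => exact fun h _ _ => h
      | succ k ih =>
        intro c c' h h1 h2
        rw [Function.iterate_succ_apply', Function.iterate_succ_apply']
        exact hbmono (ih h h1 h2) (biter k c h1) (biter k c' h2)
    choose e hem hei using fun n => hm₀ n
    refine ⟨fun p => b^[p.1] (a (e p.1 p.2)), ?_⟩
    intro p q hpq
    rcases Sigma.Lex.lt_def.1 hpq with hfst | ⟨hfst, hsnd⟩
    · obtain ⟨d, hd⟩ : ∃ d, q.1 = p.1 + (d + 1) := ⟨q.1 - p.1 - 1, by omega⟩
      show b^[p.1] (a (e p.1 p.2)) < b^[q.1] (a (e q.1 q.2))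
      have hz : idx (a (e q.1 q.2)) = m₀ := haidx _
      generalize a (e q.1 q.2) = z at hz ⊢
      rw [hd, Function.iterate_add_apply]
      refine bmono p.1 ?_ (haidx _) ?_
      · rw [Function.iterate_succ_apply']
        exact hab _ _
      · exact biter _ _ hz
    · obtain ⟨p1, p2⟩ := p
      obtain ⟨q1, q2⟩ := q
      dsimp at hfst
      subst hfst
      show b^[p1] (a (e p1 p2)) < b^[p1] (a (e p1 q2))
      have hsnd' : p2 < q2 := hsnd
      exact bmono p1 (hamono (hem p1 hsnd') (hei _ _) (hei _ _)) (haidx _) (haidx _)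
  · -- blocks with unboundedly large powers
    push_neg at hcase
    have Q : ∀ k M, ∃ m, M ≤ m ∧ EmbAt ρ idx k m := by
      by_contra hq
      push_neg at hq
      obtain ⟨k, M, hq⟩ := hq
      choose nm hnm using hcase
      set nstar := max k ((Finset.range M).sup nm) with hnstar
      obtain ⟨mstar, hstar⟩ := h5 nstar
      rcases le_or_gt M mstar with hge | hlt
      · exact hq mstar hge (embAt_down (le_max_left _ _) hstar)
      · exact hnm mstar
          (embAt_down (le_trans (Finset.le_sup (Finset.mem_range.2 hlt)) (le_max_right _ _)) hstar)
    choose pick hpick1 hpick2 using Q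
    set ms : ℕ → ℕ := fun k => Nat.rec (pick 0 0) (fun k ih => pick (k + 1) (ih + 1)) k
      with hmsdef
    have hms1 : ∀ k, EmbAt ρ idx k (ms k) := by
      intro k
      cases k with
      | zero => exact hpick2 0 0
      | succ k => exact hpick2 (k + 1) (ms k + 1)
    have hms2 : StrictMono ms :=
      strictMono_nat_of_lt_succ fun k =>
        lt_of_lt_of_le (Nat.lt_succ_self _) (hpick1 (k + 1) (ms k + 1))
    choose e hem hei using hms1
    refine ⟨fun p => e p.1 p.2, ?_⟩
    intro p q hpq
    rcases Sigma.Lex.lt_def.1 hpq with hfst | ⟨hfst, hsnd⟩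
    · refine idx_lt ?_
      rw [hei p.1 p.2, hei q.1 q.2]
      exact hms2 hfst
    · obtain ⟨p1, p2⟩ := p
      obtain ⟨q1, q2⟩ := q
      dsimp at hfst
      subst hfst
      exact hem p1 (hsnd : p2 < q2)

end Tall

section Main
variable {ρ : Type u} [LinearOrder ρ]

theorem split_pow [Infinite ρ] {A B : Type v} [LinearOrder A] [LinearOrder B]
    (G : (Σₗ n : ℕ, OrdPow ρ n) → B ×ₗ A) (hG : StrictMono G) (n : ℕ) :
    (∃ f : OrdPow ρ n → A, StrictMono f) ∨ (∃ f : OrdPow ρ n → B, StrictMono f) := by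
  haveI : Nonempty ρ := inferInstance
  obtain ⟨P, h1, h2⟩ := exists_pair (ρ := ρ) n n
  set F : OrdPow ρ n → OrdPow ρ n → B ×ₗ A :=
    fun y x => G (toLex ⟨n + n, P y x⟩) with hF
  have hF1 : ∀ y y' x x', y < y' → F y x < F y' x' :=
    fun y y' x x' hy => hG (summand_strictMono (n + n) (h1 y y' x x' hy))
  have hF2 : ∀ y x x', x < x' → F y x < F y x' :=
    fun y x x' hx => hG (summand_strictMono (n + n) (h2 y x x' hx))
  have hproj : ∀ {u v : B ×ₗ A}, u < v → (ofLex u).1 ≤ (ofLex v).1 := by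
    intro u v huv
    rcases (Prod.Lex.lt_iff (x := u) (y := v)).1 huv with hl | ⟨hl, _⟩
    · exact hl.le
    · exact hl.le
  rcases dicho (fun w : B ×ₗ A => (ofLex w).1) (fun h => hproj h) F hF1 hF2 with
    ⟨y, hy⟩ | ⟨φ, hφ⟩
  · left
    refine ⟨fun x => (ofLex (F y x)).2, fun x x' hx => ?_⟩
    rcases (Prod.Lex.lt_iff (x := F y x) (y := F y x')).1 (hF2 y x x' hx) with hl | ⟨_, hl⟩
    · rw [hy x x'] at hl; exact absurd hl (lt_irrefl _)
    · exact hl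
  · exact Or.inr ⟨φ, hφ⟩

theorem main_infinite [Infinite ρ] {A B : Type v} [LinearOrder A] [LinearOrder B]
    (hA : Embeds A (Σₗ n : ℕ, OrdPow ρ n))
    (hB : Embeds B (Σₗ n : ℕ, OrdPow ρ n))
    (h : Embeds (Σₗ n : ℕ, OrdPow ρ n) (B ×ₗ A)) :
    Embeds (Σₗ n : ℕ, OrdPow ρ n) A ∨ Embeds (Σₗ n : ℕ, OrdPow ρ n) B := by
  haveI : Nonempty ρ := inferInstance
  obtain ⟨G, hG⟩ := h
  by_cases hall : ∀ n, ∃ f : OrdPow ρ n → A, StrictMono f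
  · obtain ⟨gA, hgA⟩ := hA
    exact Or.inl (tall_emb gA hgA hall)
  · push_neg at hall
    obtain ⟨n₀, hn₀⟩ := hall
    have hBall : ∀ n, ∃ f : OrdPow ρ n → B, StrictMono f := by
      intro n
      rcases split_pow G hG (max n n₀) with hA' | hB'
      · exfalso
        obtain ⟨f, hf⟩ := hA'
        obtain ⟨p, hp⟩ := exists_pad (ρ := ρ) (le_max_right n n₀)
        exact hn₀ (fun x => f (p x)) (hf.comp hp)
      · obtain ⟨f, hf⟩ := hB'
        obtain ⟨p, hp⟩ := exists_pad (ρ := ρ) (le_max_left n n₀)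
        exact ⟨fun x => f (p x), hf.comp hp⟩
    obtain ⟨gB, hgB⟩ := hB
    exact Or.inr (tall_emb gB hgB hBall)

end Main

section FiniteCase
variable {ρ : Type u} [LinearOrder ρ]

instance ordPowFinite [Finite ρ] : (n : ℕ) → Finite (OrdPow ρ n)
  | 0 => inferInstanceAs (Finite PUnit.{u+1})
  | n + 1 =>
    haveI := ordPowFinite n
    Finite.of_equiv (ρ × OrdPow ρ n) toLex

theorem tau_initial_finite [Finite ρ] (t : Σₗ n : ℕ, OrdPow ρ n) :
    {s : Σₗ n : ℕ, OrdPow ρ n | s < t}.Finite := by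
  apply Set.Finite.subset
    (Set.Finite.biUnion (Set.finite_Iio (t.1 + 1))
      (fun j _ => Set.finite_univ.image
        (fun x : OrdPow ρ j => (toLex ⟨j, x⟩ : Σₗ n : ℕ, OrdPow ρ n))))
  intro s hs
  have hle : s.1 < t.1 + 1 := Nat.lt_succ_of_le (sigma_fst_mono hs)
  obtain ⟨s1, s2⟩ := s
  exact Set.mem_biUnion hle ⟨s2, Set.mem_univ _, rfl⟩

theorem initial_finite_of_emb {X Y : Type*} [LinearOrder X] [LinearOrder Y]
    (f : X → Y) (hf : StrictMono f) (h : ∀ y : Y, {z | z < y}.Finite) (x : X) :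
    {z : X | z < x}.Finite := by
  refine Set.Finite.of_finite_image (Set.Finite.subset (h (f x)) ?_) hf.injective.injOn
  rintro y ⟨z, hz, rfl⟩
  exact hf hz

theorem emb_nat_of_initial_finite {X : Type*} [LinearOrder X]
    (h : ∀ x : X, {z | z < x}.Finite) : ∃ f : X → ℕ, StrictMono f := by
  refine ⟨fun x => (h x).toFinset.card, fun x y hxy => ?_⟩
  apply Finset.card_lt_card
  have hsub : (h x).toFinset ⊆ (h y).toFinset := by
    intro z hz
    rw [Set.Finite.mem_toFinset] at *
    exact lt_trans hz hxy
  refine (Finset.ssubset_iff_of_subset hsub).2 ⟨x, ?_, ?_⟩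
  · rw [Set.Finite.mem_toFinset]; exact hxy
  · rw [Set.Finite.mem_toFinset]; exact lt_irrefl x

theorem emb_of_infinite {X : Type*} [LinearOrder X] [Infinite X]
    (h : ∀ x : X, {z | z < x}.Finite) : ∃ f : ℕ → X, StrictMono f := by
  have hex : ∀ x : X, ∃ y, x < y := by
    intro x
    by_contra hc
    push_neg at hc
    have hfin : (Set.univ : Set X).Finite := by
      refine Set.Finite.subset ((h x).union (Set.finite_singleton x)) ?_
      intro z _
      rcases (hc z).lt_or_eq with hl | he
      · exact Or.inl hl
      · exact Or.inr he
    exact Set.infinite_univ hfin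
  choose nxt hnxt using hex
  obtain ⟨x₀⟩ : Nonempty X := inferInstance
  refine ⟨fun n => nxt^[n] x₀, strictMono_nat_of_lt_succ fun n => ?_⟩
  rw [Function.iterate_succ_apply']
  exact hnxt _

theorem tau_infinite [Finite ρ] [Nonempty ρ] : Infinite (Σₗ n : ℕ, OrdPow ρ n) := by
  refine Infinite.of_injective (fun n : ℕ => (toLex ⟨n, (ordPow_nonempty n).some⟩ :
    Σₗ n : ℕ, OrdPow ρ n)) (StrictMono.injective fun m n hmn => ?_)
  exact sigma_lt_of_fst_lt hmn

theorem main_finite [Finite ρ] [Nonempty ρ] {A B : Type v} [LinearOrder A] [LinearOrder B]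
    (hA : Embeds A (Σₗ n : ℕ, OrdPow ρ n))
    (hB : Embeds B (Σₗ n : ℕ, OrdPow ρ n))
    (h : Embeds (Σₗ n : ℕ, OrdPow ρ n) (B ×ₗ A)) :
    Embeds (Σₗ n : ℕ, OrdPow ρ n) A ∨ Embeds (Σₗ n : ℕ, OrdPow ρ n) B := by
  haveI : Infinite (Σₗ n : ℕ, OrdPow ρ n) := tau_infinite
  obtain ⟨G, hG⟩ := h
  haveI : Infinite (B ×ₗ A) := Infinite.of_injective G hG.injective
  haveI : Infinite (B × A) := Infinite.of_injective (ofLex : B ×ₗ A → B × A) ofLex.injective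
  obtain ⟨fτ, hfτ⟩ := emb_nat_of_initial_finite (tau_initial_finite (ρ := ρ))
  have key : ∀ (C : Type v) [LinearOrder C], Embeds C (Σₗ n : ℕ, OrdPow ρ n) → Infinite C →
      Embeds (Σₗ n : ℕ, OrdPow ρ n) C := by
    intro C _ ⟨gC, hgC⟩ hCinf
    haveI := hCinf
    obtain ⟨e, he⟩ := emb_of_infinite (initial_finite_of_emb gC hgC tau_initial_finite)
    exact ⟨fun p => e (fτ p), he.comp hfτ⟩
  rcases finite_or_infinite A with hAfin | hAinf
  · rcases finite_or_infinite B with hBfin | hBinf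
    · haveI := hAfin; haveI := hBfin
      exact (not_finite (B × A)).elim
    · exact Or.inr (key B hB hBinf)
  · exact Or.inl (key A hA hAinf)

theorem tau_subsingleton (hρ : IsEmpty ρ) : Subsingleton (Σₗ n : ℕ, OrdPow ρ n) := by
  constructor
  intro p q
  obtain ⟨p1, p2⟩ := p
  obtain ⟨q1, q2⟩ := q
  cases p1 with
  | succ k => exact (hρ.elim (OrdPow.head p2))
  | zero =>
    cases q1 with
    | succ k => exact (hρ.elim (OrdPow.head q2))
    | zero =>
      haveI : Subsingleton (OrdPow ρ 0) := inferInstanceAs (Subsingleton PUnit)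
      rw [Subsingleton.elim p2 q2]

end FiniteCase

theorem main_empty (hρ : IsEmpty ρ) {A B : Type v} [LinearOrder A] [LinearOrder B]
    (h : Embeds (Σₗ n : ℕ, OrdPow ρ n) (B ×ₗ A)) :
    Embeds (Σₗ n : ℕ, OrdPow ρ n) A := by
  haveI := tau_subsingleton hρ
  obtain ⟨G, hG⟩ := h
  set t₀ : Σₗ n : ℕ, OrdPow ρ n := toLex ⟨0, PUnit.unit⟩ with ht₀
  refine ⟨fun _ => (ofLex (G t₀)).2, fun p q hpq => ?_⟩
  exact absurd (Subsingleton.elim p q ▸ hpq) (lt_irrefl q)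


/- The product `AB` (replace each point of `B` by a copy of `A`) is represented as
`B ×ₗ A`; the ordered sum `τ = Σ_{n<ω} ρⁿ` is represented as `Σₗ n : ℕ, OrdPow ρ n`. -/
theorem stmt_9 (ρ : Type u) [LinearOrder ρ]
    (A B : Type v) [LinearOrder A] [LinearOrder B]
    (hA : Embeds A (Σₗ n : ℕ, OrdPow ρ n))
    (hB : Embeds B (Σₗ n : ℕ, OrdPow ρ n))
    (h : Embeds (Σₗ n : ℕ, OrdPow ρ n) (B ×ₗ A)) :
    Embeds (Σₗ n : ℕ, OrdPow ρ n) A ∨ Embeds (Σₗ n : ℕ, OrdPow ρ n) B := by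
  rcases finite_or_infinite ρ with hfin | hinf
  · rcases isEmpty_or_nonempty ρ with hemp | hne
    · exact Or.inl (main_empty hemp h)
    · exact main_finite hA hB h
  · exact main_infinite hA hB h
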